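/- In the affine Hecke algebra $H_2^{\mathrm{aff}}$ over $A = \mathbb{Z}[q^{\pm1}, v_1^{\pm1}, \dots, v_m^{\pm1}]$, with $f_1 = f_{\mathbf v}(X_1)$, $f_2 = T f_1 T$, $z$ as in Lemma (b) (i.e. $qf_{\mathbf v}(X_2) = f_2 + (q-1)zT$), and $J_{\mathbf v}$ the two-sided ideal generated by $f_1$: for every $k \in \mathbb{Z}$, the element $(q-1) X_1^k z T$ is congruent modulo $J_{\mathbf v}$ to the central element $q X_1^k f_{\mathbf v}(X_2) + q X_2^k f_{\mathbf v}(X_1)$ of $H_2^{\mathrm{aff}}$. In particular, the image of $(q-1)X_1^k z T$ in $\mathcal{K}_2^{\mathbf v} = H_2^{\mathrm{aff}}/J_{\mathbf v}$ lies in the image of the centre of $H_2^{\mathrm{aff}}$. -/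

import Mathlib

noncomputable section

/-- The ring `A = ℤ[q^{±1}, v₁^{±1}, …, v_m^{±1}]`, realized as the group
algebra of `ℤ × ℤ^m` over `ℤ`. -/
abbrev Av (m : ℕ) : Type := AddMonoidAlgebra ℤ (ℤ × (Fin m → ℤ))

/-- The element `q`. -/
def qv (m : ℕ) : Av m := AddMonoidAlgebra.single (1, 0) 1

/-- The element `vᵢ`. -/
def vv (m : ℕ) (i : Fin m) : Av m := AddMonoidAlgebra.single (0, Pi.single i 1) 1

/-- The `j`-th elementary symmetric polynomial of `v₁, …, v_m`. -/
def ev (m : ℕ) (j : ℕ) : Av m :=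
  ∑ s ∈ Finset.powersetCard j (Finset.univ : Finset (Fin m)), ∏ i ∈ s, vv m i

/-- The Laurent polynomial ring `A[X₁^{±1}, X₂^{±1}]`. -/
abbrev Lau (A : Type) [CommRing A] : Type := AddMonoidAlgebra A (ℤ × ℤ)

variable (A : Type) [CommRing A]

/-- The monomial `X₁^i X₂^j`. -/
def Xm (i j : ℤ) : Lau A := AddMonoidAlgebra.single (i, j) 1

/-- The automorphism `s` interchanging `X₁` and `X₂`. -/
def sw (p : Lau A) : Lau A := AddMonoidAlgebra.ofCoeff (Finsupp.equivMapDomain (Equiv.prodComm ℤ ℤ) p.coeff)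

/-- Constants. -/
def CC (a : A) : Lau A := algebraMap A (Lau A) a

/-- `p` is `m`-restricted. -/
def Res (m : ℕ) (p : Lau A) : Prop :=
  ∀ ab ∈ p.coeff.support, 0 ≤ ab.1 ∧ ab.1 ≤ (m : ℤ) - 1 ∧ 0 ≤ ab.2 ∧ ab.2 ≤ (m : ℤ) - 1

/-- `f_v(X₁) = ∏ᵢ (X₁ - vᵢ)`. -/
def fv1 (m : ℕ) : Lau (Av m) := ∏ i : Fin m, (Xm (Av m) 1 0 - CC (Av m) (vv m i))

/-- `f_v(X₂) = ∏ᵢ (X₂ - vᵢ)`. -/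
def fv2 (m : ℕ) : Lau (Av m) := ∏ i : Fin m, (Xm (Av m) 0 1 - CC (Av m) (vv m i))

/-- The complete homogeneous symmetric polynomial `H_k` in `X₁, X₂`. -/
def Hc (k : ℕ) : Lau A := ∑ i ∈ Finset.range (k + 1), Xm A (i : ℤ) ((k : ℤ) - (i : ℤ))

/-- The element `z = (-1)^{m+1} e_m + X₁X₂ ∑_{j=0}^{m-2} (-1)^j e_j H_{m-2-j}`. -/
def zel (m : ℕ) : Lau (Av m) :=
  CC (Av m) ((-1 : Av m) ^ (m + 1) * ev m m) +
    Xm (Av m) 1 1 *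
      ∑ j ∈ Finset.range (m - 1), CC (Av m) ((-1 : Av m) ^ j * ev m j) * Hc (Av m) (m - 2 - j)

/-! The identity `z (X₂ - X₁) = X₁ f_v(X₂) - X₂ f_v(X₁)` says that `-(f_v(X₂) + z)` is the divided
difference `(f₁ - s f₁) / (1 - X₁ X₂⁻¹)`, so the Bernstein relation and the quadratic relation give
`T f₁ T = q f_v(X₂) - (q - 1) z T`. Multiplying on the left by `X₁^k`,
`(q - 1) X₁^k z T - q (X₁^k f_v(X₂) + X₂^k f_v(X₁)) = -X₁^k T · f₁ T - f₁ · q X₂^k`, which lies in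
`J_v`. The element `q (X₁^k f_v(X₂) + X₂^k f_v(X₁))` is `s`-invariant, hence commutes with `T` by
the Bernstein relation, and with every Laurent polynomial, so it is central. -/

open Finset

theorem prod_sub_algebraMap_eq_sum_esymm {R B : Type*} [CommRing R] [CommRing B] [Algebra R B]
    (m : ℕ) (c : Fin m → R) (x : B) :
    ∏ i, (x - algebraMap R B (c i)) = ∑ j ∈ range (m + 1),
      algebraMap R B ((-1) ^ j * ∑ s ∈ powersetCard j univ, ∏ i ∈ s, c i) * x ^ (m - j) := by
  have h := congrArg (Polynomial.aeval x) (Multiset.prod_X_sub_X_eq_sum_esymm (univ.val.map c))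
  rw [Multiset.map_map, map_multiset_prod, Multiset.map_map, map_sum, Multiset.card_map] at h
  simp only [Function.comp_def, map_sub, Polynomial.aeval_X, Polynomial.aeval_C, map_mul, map_pow,
    map_neg, map_one, card_val, card_univ, Fintype.card_fin, esymm_map_val] at h
  rw [prod_eq_multiset_prod, h]
  simp only [map_mul, map_pow, map_neg, map_one, mul_assoc]

theorem Xm_mul_Xm (a b c d : ℤ) : Xm A a b * Xm A c d = Xm A (a + c) (b + d) := by
  simp [Xm, AddMonoidAlgebra.single_mul_single]

theorem Xm_pow_mul_Xm_pow (i j : ℕ) : Xm A 1 0 ^ i * Xm A 0 1 ^ j = Xm A i j := by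
  simp [Xm, AddMonoidAlgebra.single_pow, AddMonoidAlgebra.single_mul_single]

theorem sw_eq_domCongr (p : Lau A) :
    sw A p = AddMonoidAlgebra.domCongr A A (AddEquiv.prodComm : (ℤ × ℤ) ≃+ ℤ × ℤ) p := by
  ext x; simp [sw, Finsupp.equivMapDomain_apply]

theorem sw_mul (p r : Lau A) : sw A (p * r) = sw A p * sw A r := by
  simp only [sw_eq_domCongr, map_mul]

theorem sw_add (p r : Lau A) : sw A (p + r) = sw A p + sw A r := by
  simp only [sw_eq_domCongr, map_add]

theorem sw_CC (a : A) : sw A (CC A a) = CC A a := by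
  rw [sw_eq_domCongr, CC, AlgEquiv.commutes]

theorem sw_Xm (i j : ℤ) : sw A (Xm A i j) = Xm A j i := by
  simp [sw_eq_domCongr, Xm]

theorem sw_fv1 (m : ℕ) : sw (Av m) (fv1 m) = fv2 m := by
  rw [fv1, fv2, sw_eq_domCongr, map_prod]
  simp only [map_sub, ← sw_eq_domCongr, sw_Xm, sw_CC]

theorem sw_fv2 (m : ℕ) : sw (Av m) (fv2 m) = fv1 m := by
  rw [fv1, fv2, sw_eq_domCongr, map_prod]
  simp only [map_sub, ← sw_eq_domCongr, sw_Xm, sw_CC]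

theorem fv1_eq_sum (m : ℕ) :
    fv1 m = ∑ j ∈ range (m + 1), CC (Av m) ((-1) ^ j * ev m j) * Xm (Av m) 1 0 ^ (m - j) :=
  prod_sub_algebraMap_eq_sum_esymm m (vv m) _

theorem fv2_eq_sum (m : ℕ) :
    fv2 m = ∑ j ∈ range (m + 1), CC (Av m) ((-1) ^ j * ev m j) * Xm (Av m) 0 1 ^ (m - j) :=
  prod_sub_algebraMap_eq_sum_esymm m (vv m) _

theorem Xm_one_one_mul_Hc_mul_sub (d : ℕ) :
    Xm A 1 1 * Hc A d * (Xm A 0 1 - Xm A 1 0) =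
      Xm A 1 0 * Xm A 0 1 ^ (d + 2) - Xm A 0 1 * Xm A 1 0 ^ (d + 2) := by
  have hHc : Hc A d = ∑ i ∈ range (d + 1), Xm A 1 0 ^ i * Xm A 0 1 ^ (d + 1 - 1 - i) := by
    refine sum_congr rfl fun i hi => ?_
    rw [Xm_pow_mul_Xm_pow]
    have : i ≤ d := Nat.lt_succ_iff.mp (mem_range.mp hi)
    push_cast [Nat.add_sub_cancel, Nat.cast_sub this]
    rfl
  have hxy : Xm A 1 1 = Xm A 1 0 * Xm A 0 1 := by rw [Xm_mul_Xm]; rfl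
  rw [hHc, hxy]
  linear_combination (-(Xm A 1 0 * Xm A 0 1)) * geom_sum₂_mul (Xm A 1 0) (Xm A 0 1) (d + 1)

theorem zel_mul_sub (m : ℕ) :
    zel m * (Xm (Av m) 0 1 - Xm (Av m) 1 0) = Xm (Av m) 1 0 * fv2 m - Xm (Av m) 0 1 * fv1 m := by
  set x := Xm (Av m) 1 0
  set y := Xm (Av m) 0 1
  set c : ℕ → Lau (Av m) := fun j => CC (Av m) ((-1) ^ j * ev m j)
  have hsplit : x * fv2 m - y * fv1 m =
      ∑ j ∈ range (m + 1), c j * (x * y ^ (m - j) - y * x ^ (m - j)) := by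
    rw [fv1_eq_sum, fv2_eq_sum, mul_sum, mul_sum, ← sum_sub_distrib]
    exact sum_congr rfl fun j _ => by ring
  rcases m with _ | n
  · simp [hsplit, zel, c, ev, CC, -AddMonoidAlgebra.coe_algebraMap]
  · have hterm : ∀ j ∈ range n, c j * (x * y ^ (n + 1 - j) - y * x ^ (n + 1 - j)) =
        Xm (Av (n + 1)) 1 1 * (c j * Hc (Av (n + 1)) (n + 1 - 2 - j)) * (y - x) := by
      intro j hj
      obtain ⟨d, rfl⟩ := Nat.exists_eq_add_of_lt (mem_range.mp hj)
      rw [show j + d + 1 + 1 - j = d + 2 by omega, show j + d + 1 + 1 - 2 - j = d by omega]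
      linear_combination (-c j) * Xm_one_one_mul_Hc_mul_sub (Av (j + d + 1 + 1)) d
    rw [hsplit, sum_range_succ, sum_range_succ, sum_congr rfl hterm, zel, Nat.add_sub_cancel,
      mul_sum, add_mul, sum_mul]
    simp only [Nat.sub_self, show n + 1 - n = 1 by omega, pow_zero, pow_one, c, CC, map_mul,
      map_pow, map_neg, map_one]
    ring

theorem mul_self_eq_of_sub_algebraMap_mul_add_one_eq_zero {R B : Type*} [CommRing R] [Ring B]
    [Algebra R B] {T : B} {q : R} (h : (T - algebraMap R B q) * (T + 1) = 0) :
    T * T = (q - 1) • T + algebraMap R B q := by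
  rw [Algebra.smul_def, map_sub, map_one, ← sub_eq_zero, ← h]
  noncomm_ring

def symmFv (m : ℕ) (k : ℤ) : Lau (Av m) :=
  CC (Av m) (qv m) * (Xm (Av m) k 0 * fv2 m + Xm (Av m) 0 k * fv1 m)

theorem sw_symmFv (m : ℕ) (k : ℤ) : sw (Av m) (symmFv m k) = symmFv m k := by
  rw [symmFv, sw_mul, sw_add, sw_mul, sw_mul, sw_CC, sw_Xm, sw_Xm, sw_fv1, sw_fv2]
  ring

section Hecke

variable {m : ℕ} {H : Type} [Ring H] [Algebra (Av m) H]

/-- The Bernstein relation `T f = s(f) T + (q - 1) g`, where `g = (f - s f) / (1 - X₁ X₂⁻¹)`. -/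
def BernsteinRel (ι : Lau (Av m) →ₐ[Av m] H) (T : H) : Prop :=
  ∀ f g : Lau (Av m), g * (1 - Xm (Av m) 1 0 * Xm (Av m) 0 (-1)) = f - sw (Av m) f →
    T * ι f = ι (sw (Av m) f) * T + algebraMap (Av m) H (qv m - 1) * ι g

variable {ι : Lau (Av m) →ₐ[Av m] H} {T : H}

theorem BernsteinRel.T_mul_fv1 (h : BernsteinRel ι T) :
    T * ι (fv1 m) = ι (fv2 m) * T - (qv m - 1) • ι (fv2 m + zel m) := by
  have hy : Xm (Av m) 0 1 * Xm (Av m) 0 (-1) = 1 := by rw [Xm_mul_Xm]; rfl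
  have hdiv : -(fv2 m + zel m) * (1 - Xm (Av m) 1 0 * Xm (Av m) 0 (-1)) =
      fv1 m - sw (Av m) (fv1 m) := by
    rw [sw_fv1]
    linear_combination (-Xm (Av m) 0 (-1)) * zel_mul_sub m + (zel m + fv1 m) * hy
  rw [h _ _ hdiv, sw_fv1, map_neg, mul_neg, ← sub_eq_add_neg, Algebra.smul_def]

theorem BernsteinRel.T_mul_fv1_mul_T (h : BernsteinRel ι T)
    (hquad : (T - algebraMap (Av m) H (qv m)) * (T + 1) = 0) :
    T * ι (fv1 m) * T = qv m • ι (fv2 m) - (qv m - 1) • (ι (zel m) * T) := by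
  rw [h.T_mul_fv1, sub_mul, mul_assoc, mul_self_eq_of_sub_algebraMap_mul_add_one_eq_zero hquad,
    mul_add, mul_smul_comm, ← Algebra.commutes, ← Algebra.smul_def, smul_mul_assoc, map_add,
    add_mul]
  module

theorem BernsteinRel.commute_of_sw_eq (h : BernsteinRel ι T) {c : Lau (Av m)}
    (hc : sw (Av m) c = c) : Commute T (ι c) := by
  have := h c 0 (by rw [hc, sub_self, zero_mul])
  rwa [hc, map_zero, mul_zero, add_zero] at this

theorem BernsteinRel.mem_center_of_sw_eq (h : BernsteinRel ι T)
    (hspan : ∀ x : H, ∃ fg : Lau (Av m) × Lau (Av m), x = ι fg.1 + ι fg.2 * T)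
    {c : Lau (Av m)} (hc : sw (Av m) c = c) : ι c ∈ Set.center H := by
  have hcomm : ∀ f, Commute (ι f) (ι c) := fun f => (Commute.all f c).map ι
  rw [Semigroup.mem_center_iff]
  intro x
  obtain ⟨⟨f, g⟩, rfl⟩ := hspan x
  exact ((hcomm f).add_left ((hcomm g).mul_left (h.commute_of_sw_eq hc))).eq

theorem BernsteinRel.smul_zel_mul_T_sub_symmFv (h : BernsteinRel ι T)
    (hquad : (T - algebraMap (Av m) H (qv m)) * (T + 1) = 0) (k : ℤ) :
    (qv m - 1) • (ι (Xm (Av m) k 0 * zel m) * T) - ι (symmFv m k) =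
      -(ι (Xm (Av m) k 0) * T * (ι (fv1 m) * T)) - ι (fv1 m) * (qv m • ι (Xm (Av m) 0 k)) := by
  have hz : (qv m - 1) • (ι (zel m) * T) = qv m • ι (fv2 m) - T * ι (fv1 m) * T := by
    rw [h.T_mul_fv1_mul_T hquad]; abel
  rw [symmFv, CC, ← Algebra.smul_def, map_smul, mul_comm (Xm (Av m) 0 k), map_mul,
    mul_assoc, ← mul_smul_comm, hz, map_add, map_mul, map_mul]
  simp only [mul_sub, mul_smul_comm, mul_assoc]
  module

end Hecke

theorem stmt10_general (m : ℕ) (H : Type) [Ring H] [Algebra (Av m) H]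
    (ι : Lau (Av m) →ₐ[Av m] H) (T : H)
    (hfree : ∀ h : H, ∃! fg : Lau (Av m) × Lau (Av m), h = ι fg.1 + ι fg.2 * T)
    (hquad : (T - algebraMap (Av m) H (qv m)) * (T + 1) = 0)
    (hcomm : ∀ f g : Lau (Av m),
      g * (1 - Xm (Av m) 1 0 * Xm (Av m) 0 (-1)) = f - sw (Av m) f →
      T * ι f = ι (sw (Av m) f) * T + algebraMap (Av m) H (qv m - 1) * ι g) :
    ∀ k : ℤ,
      algebraMap (Av m) H (qv m - 1) * (ι (Xm (Av m) k 0 * zel m) * T) -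
          ι (CC (Av m) (qv m) * (Xm (Av m) k 0 * fv2 m + Xm (Av m) 0 k * fv1 m)) ∈
        Ideal.span {h : H | ∃ y : H, h = ι (fv1 m) * y} ∧
      ι (CC (Av m) (qv m) * (Xm (Av m) k 0 * fv2 m + Xm (Av m) 0 k * fv1 m)) ∈
        Set.center H := by
  have hB : BernsteinRel ι T := hcomm
  intro k
  refine ⟨?_, hB.mem_center_of_sw_eq (fun x => (hfree x).exists) (sw_symmFv m k)⟩
  rw [← Algebra.smul_def]
  change _ - ι (symmFv m k) ∈ _
  rw [hB.smul_zel_mul_T_sub_symmFv hquad]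
  exact sub_mem (neg_mem (Ideal.mul_mem_left _ _ (Ideal.subset_span ⟨T, rfl⟩)))
    (Ideal.subset_span ⟨_, rfl⟩)

theorem stmt10 (m : ℕ) (hm : 1 ≤ m) (H : Type) [Ring H] [Algebra (Av m) H]
    (ι : Lau (Av m) →ₐ[Av m] H) (T : H)
    (hinj : Function.Injective ι)
    (hfree : ∀ h : H, ∃! fg : Lau (Av m) × Lau (Av m), h = ι fg.1 + ι fg.2 * T)
    (hquad : (T - algebraMap (Av m) H (qv m)) * (T + 1) = 0)
    (hTX : T * ι (Xm (Av m) 1 0) * T = algebraMap (Av m) H (qv m) * ι (Xm (Av m) 0 1))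
    (hcomm : ∀ f g : Lau (Av m),
      g * (1 - Xm (Av m) 1 0 * Xm (Av m) 0 (-1)) = f - sw (Av m) f →
      T * ι f = ι (sw (Av m) f) * T + algebraMap (Av m) H (qv m - 1) * ι g) :
    ∀ k : ℤ,
      algebraMap (Av m) H (qv m - 1) * (ι (Xm (Av m) k 0 * zel m) * T) -
          ι (CC (Av m) (qv m) * (Xm (Av m) k 0 * fv2 m + Xm (Av m) 0 k * fv1 m)) ∈
        Ideal.span {h : H | ∃ y : H, h = ι (fv1 m) * y} ∧
      ι (CC (Av m) (qv m) * (Xm (Av m) k 0 * fv2 m + Xm (Av m) 0 k * fv1 m)) ∈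
        Set.center H :=
  stmt10_general m H ι T hfree hquad hcomm
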